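/- Let (A, ∘, ρ, ⟨·,·⟩) be a Courant algebroid (in its Leibniz formulation) and N : A → A a (1,1)-tensor with adjoint N* defined by ⟨NX, Y⟩ = ⟨X, N*Y⟩; set Δ = N + N*. Then the invariance identity ρ(NX)⟨Y,Z⟩ = ⟨X∘_N Y, Z⟩ + ⟨Y, X∘_N Z⟩ holds for all X, Y, Z if and only if Δ commutes with left multiplication: X∘ΔZ = Δ(X∘Z) for all X, Z. -/

import Mathlib

/-!
Invariance of the pairing makes each left multiplication `m X` skew up to the anchor, so the
commutator `⁅m X, N⁆` has adjoint `⁅m X, N*⁆`. Splitting `X ∘_N Y = NX ∘ Y + ⁅m X, N⁆ Y` and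
applying invariance to the first term and this adjointness to the second gives
`⟨X ∘_N Y, Z⟩ + ⟨Y, X ∘_N Z⟩ = ρ(NX)⟨Y, Z⟩ + ⟨Y, ⁅m X, Δ⁆ Z⟩`,
and by nondegeneracy the defect term vanishes for all `Y` exactly when `⁅m X, Δ⁆ = 0`.
-/

namespace CourantAlgebroid

variable {R A F : Type*} [CommRing R] [AddCommGroup A] [Module R A] [AddCommGroup F] [Module R F]
  {m : A →ₗ[R] A →ₗ[R] A} {B : A →ₗ[R] A →ₗ[R] F} {ρ : A → F → F}

def contractedProduct (m : A →ₗ[R] A →ₗ[R] A) (N : Module.End R A) (X Y : A) : A :=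
  m (N X) Y + m X (N Y) - N (m X Y)

theorem contractedProduct_eq_add_lie (N : Module.End R A) (X Y : A) :
    contractedProduct m N X Y = m (N X) Y + (⁅m X, N⁆ : Module.End R A) Y := by
  rw [contractedProduct, Ring.lie_def, LinearMap.sub_apply, Module.End.mul_apply,
    Module.End.mul_apply, add_sub_assoc]

theorem isAdjointPair_lie_mulLeft (hinv : ∀ X Y Z, ρ X (B Y Z) = B (m X Y) Z + B Y (m X Z))
    {N Ns : Module.End R A} (hadj : LinearMap.IsAdjointPair B B N Ns) (X : A) :
    LinearMap.IsAdjointPair B B ⇑(⁅m X, N⁆ : Module.End R A) ⇑(⁅m X, Ns⁆ : Module.End R A) := by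
  intro Y Z
  have hNY : B (m X (N Y)) Z = ρ X (B Y (Ns Z)) - B Y (Ns (m X Z)) := by
    rw [← hadj, ← hadj, hinv, add_sub_cancel_right]
  have hNsZ : B (N (m X Y)) Z = ρ X (B Y (Ns Z)) - B Y (m X (Ns Z)) := by
    rw [hadj, hinv, add_sub_cancel_right]
  simp only [Ring.lie_def, LinearMap.sub_apply, Module.End.mul_apply, map_sub, hNY, hNsZ]
  abel

theorem pairing_contractedProduct_add (hinv : ∀ X Y Z, ρ X (B Y Z) = B (m X Y) Z + B Y (m X Z))
    {N Ns : Module.End R A} (hadj : LinearMap.IsAdjointPair B B N Ns) (X Y Z : A) :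
    B (contractedProduct m N X Y) Z + B Y (contractedProduct m N X Z) =
      ρ (N X) (B Y Z) + B Y ((⁅m X, N⁆ : Module.End R A) Z + (⁅m X, Ns⁆ : Module.End R A) Z) := by
  rw [contractedProduct_eq_add_lie, contractedProduct_eq_add_lie, map_add, LinearMap.add_apply,
    isAdjointPair_lie_mulLeft hinv hadj X Y Z, hinv (N X)]
  simp only [map_add]
  abel

theorem forall_pairing_eq_zero_iff (hsym : ∀ X Y, B X Y = B Y X)
    (hnondeg : ∀ a, (∀ b, B a b = 0) → a = 0) {v : A} :
    (∀ Y, B Y v = 0) ↔ v = 0 := by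
  refine ⟨fun h ↦ hnondeg v fun Y ↦ ?_, fun hv Y ↦ by rw [hv, map_zero]⟩
  rw [hsym, h]

end CourantAlgebroid

open CourantAlgebroid in
theorem contracted_invariance_iff_delta_commutes_general
    {A F : Type*} [AddCommGroup A] [Module ℝ A] [AddCommGroup F] [Module ℝ F]
    (m : A →ₗ[ℝ] A →ₗ[ℝ] A)           -- the Leibniz product ∘
    (B : A →ₗ[ℝ] A →ₗ[ℝ] F)           -- the pairing ⟨·,·⟩
    (ρ : A →ₗ[ℝ] F →ₗ[ℝ] F)           -- the anchor acting on scalars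
    (hsym : ∀ X Y : A, B X Y = B Y X)
    (hnondeg : ∀ a : A, (∀ b : A, B a b = 0) → a = 0)
    (h6 : ∀ X Y Z : A, ρ X (B Y Z) = B (m X Y) Z + B Y (m X Z))
    (N Ns : A →ₗ[ℝ] A)
    (hadj : ∀ X Y : A, B (N X) Y = B X (Ns Y))
    (cN : A → A → A)
    (hcN : ∀ X Y : A, cN X Y = m (N X) Y + m X (N Y) - N (m X Y)) :
    (∀ X Y Z : A, ρ (N X) (B Y Z) = B (cN X Y) Z + B Y (cN X Z)) ↔
    (∀ X Z : A, m X (N Z + Ns Z) = N (m X Z) + Ns (m X Z)) := by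
  obtain rfl : cN = contractedProduct m N := funext₂ hcN
  simp only [pairing_contractedProduct_add (ρ := fun X ↦ ρ X) h6 hadj, left_eq_add]
  refine forall_congr' fun X ↦ forall_comm.trans (forall_congr' fun Z ↦ ?_)
  rw [forall_pairing_eq_zero_iff hsym hnondeg, Ring.lie_def, Ring.lie_def, map_add,
    ← sub_eq_zero (b := N (m X Z) + Ns (m X Z))]
  simp only [LinearMap.sub_apply, Module.End.mul_apply, sub_add_sub_comm]

/-- For a Courant algebroid `(A, ∘, ρ, ⟨·,·⟩)` and a
(1,1)-tensor `N` with adjoint `N*` (so `Δ = N + N*`), the invariance identity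
`ρ(NX)⟨Y,Z⟩ = ⟨X∘_N Y, Z⟩ + ⟨Y, X∘_N Z⟩` holds for all `X, Y, Z` if and only
if `Δ` commutes with left multiplication: `X∘ΔZ = Δ(X∘Z)`. -/
theorem contracted_invariance_iff_delta_commutes
    {A F : Type*} [AddCommGroup A] [Module ℝ A] [AddCommGroup F] [Module ℝ F]
    (m : A →ₗ[ℝ] A →ₗ[ℝ] A)           -- the Leibniz product ∘
    (B : A →ₗ[ℝ] A →ₗ[ℝ] F)           -- the pairing ⟨·,·⟩
    (ρ : A →ₗ[ℝ] F →ₗ[ℝ] F)           -- the anchor acting on scalars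
    (jacobi : ∀ X Y Z : A, m (m X Y) Z = m X (m Y Z) - m Y (m X Z))
    (hsym : ∀ X Y : A, B X Y = B Y X)
    (hnondeg : ∀ a : A, (∀ b : A, B a b = 0) → a = 0)
    (h4 : ∀ X Y : A, ρ X (B Y Y) = (2 : ℝ) • B X (m Y Y))
    (h5 : ∀ X Y : A, ρ X (B Y Y) = (2 : ℝ) • B (m X Y) Y)
    (h6 : ∀ X Y Z : A, ρ X (B Y Z) = B (m X Y) Z + B Y (m X Z))
    (N Ns : A →ₗ[ℝ] A)
    (hadj : ∀ X Y : A, B (N X) Y = B X (Ns Y))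
    (cN : A → A → A)
    (hcN : ∀ X Y : A, cN X Y = m (N X) Y + m X (N Y) - N (m X Y)) :
    (∀ X Y Z : A, ρ (N X) (B Y Z) = B (cN X Y) Z + B Y (cN X Z)) ↔
    (∀ X Z : A, m X (N Z + Ns Z) = N (m X Z) + Ns (m X Z)) :=
  contracted_invariance_iff_delta_commutes_general m B ρ hsym hnondeg h6 N Ns hadj cN hcN
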